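/- arXiv:1710.05973 — 2 statements merged into one kernel-verified Lean document; each statement's English description precedes it below -/
import Mathlib

section
/- For ℓ₁, ℓ₂, ℓ₃ > 0, the Gaussian integral over (z₁,z₂) ∈ ℝ⁶ × ℝ⁶ of exp(−‖z₁‖²/ℓ₁ − ‖z₂‖²/ℓ₂ − ‖z₁+z₂‖²/ℓ₃) equals π⁶·(ℓ₁⁻¹ℓ₂⁻¹ + ℓ₁⁻¹ℓ₃⁻¹ + ℓ₂⁻¹ℓ₃⁻¹)^{−3}. -/
/-!
Writing `D = ab + ac + bc`, completing the square in the second variable gives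
`a‖x‖² + b‖y‖² + c‖x + y‖² = (D / (b + c))‖x‖² + (b + c)‖y + (c / (b + c)) x‖²`.
The shear `(x, y) ↦ (x, y + (c / (b + c)) x)` preserves Lebesgue measure on `V × V`, so the
integral splits into the Gaussian integrals `(π / A)^(n/2)` over `V` with `A = D / (b + c)` and
`A = b + c`, whose product is `(π² / D)^(n/2)`.
-/

open MeasureTheory Real

theorem integral_prod_mul_comp_add {𝕜 α G : Type*} [RCLike 𝕜] [MeasurableSpace α]
    [MeasurableSpace G] [AddGroup G] [MeasurableAdd₂ G] [MeasurableNeg G]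
    {μ : Measure α} {ν : Measure G} [SFinite μ] [SFinite ν] [ν.IsAddRightInvariant]
    {φ : α → G} (hφ : Measurable φ) (f : α → 𝕜) (g : G → 𝕜) :
    ∫ z, f z.1 * g (z.2 + φ z.1) ∂μ.prod ν = (∫ x, f x ∂μ) * ∫ y, g y ∂ν := by
  have hshear : MeasurePreserving (fun z : α × G ↦ (z.1, z.2 + φ z.1)) (μ.prod ν) (μ.prod ν) :=
    (MeasurePreserving.id μ).skew_product (by fun_prop)
      (ae_of_all _ fun x ↦ map_add_right_eq_self ν (φ x))
  have hemb : MeasurableEmbedding (fun z : α × G ↦ (z.1, z.2 + φ z.1)) := by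
    refine .of_measurable_inverse (g := fun z : α × G ↦ (z.1, z.2 - φ z.1)) (by fun_prop) ?_
      (by fun_prop) fun z ↦ by simp
    rw [Set.range_eq_univ.mpr fun z : α × G ↦ ⟨(z.1, z.2 - φ z.1), by simp⟩]
    exact .univ
  rw [← integral_prod_mul]
  exact hshear.integral_comp hemb fun z ↦ f z.1 * g z.2

section InnerProductSpace

variable {V : Type*} [NormedAddCommGroup V] [InnerProductSpace ℝ V]

theorem mul_norm_sq_add_mul_norm_sq_add_mul_norm_add_sq {a b c : ℝ} (hbc : b + c ≠ 0) (x y : V) :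
    a * ‖x‖ ^ 2 + b * ‖y‖ ^ 2 + c * ‖x + y‖ ^ 2 =
      (a * b + a * c + b * c) / (b + c) * ‖x‖ ^ 2 + (b + c) * ‖y + (c / (b + c)) • x‖ ^ 2 := by
  rw [norm_add_sq_real, norm_add_sq_real, norm_smul, real_inner_smul_right, real_inner_comm,
    mul_pow, Real.norm_eq_abs, sq_abs]
  field_simp
  ring

variable [FiniteDimensional ℝ V] [MeasurableSpace V] [BorelSpace V]

theorem integral_exp_neg_mul_norm_sq_sub_mul_norm_sq_sub_mul_norm_add_sq {a b c : ℝ}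
    (hbc : 0 < b + c) (hD : 0 < a * b + a * c + b * c) :
    ∫ z : V × V, exp (-a * ‖z.1‖ ^ 2 - b * ‖z.2‖ ^ 2 - c * ‖z.1 + z.2‖ ^ 2) =
      (π ^ 2 / (a * b + a * c + b * c)) ^ (Module.finrank ℝ V / 2 : ℝ) := by
  set D := a * b + a * c + b * c
  have hA : 0 < D / (b + c) := div_pos hD hbc
  have hsplit : ∀ z : V × V, exp (-a * ‖z.1‖ ^ 2 - b * ‖z.2‖ ^ 2 - c * ‖z.1 + z.2‖ ^ 2) =
      exp (-(D / (b + c)) * ‖z.1‖ ^ 2) * exp (-(b + c) * ‖z.2 + (c / (b + c)) • z.1‖ ^ 2) := by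
    intro z
    rw [← exp_add]
    congr 1
    linarith [mul_norm_sq_add_mul_norm_sq_add_mul_norm_add_sq (a := a) hbc.ne' z.1 z.2]
  simp_rw [hsplit]
  rw [Measure.volume_eq_prod]
  refine (integral_prod_mul_comp_add (φ := fun x : V ↦ (c / (b + c)) • x) (by fun_prop)
    (fun x ↦ exp (-(D / (b + c)) * ‖x‖ ^ 2)) (fun y ↦ exp (-(b + c) * ‖y‖ ^ 2))).trans ?_
  rw [GaussianFourier.integral_rexp_neg_mul_sq_norm hA,
    GaussianFourier.integral_rexp_neg_mul_sq_norm hbc, ← mul_rpow (by positivity) (by positivity)]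
  congr 1
  field_simp

end InnerProductSpace

/-- The Gaussian integral over ℝ⁶ × ℝ⁶ appearing in the 3-vertex wheel weight. -/
theorem gaussian_integral_wheel (l1 l2 l3 : ℝ) (h1 : 0 < l1) (h2 : 0 < l2) (h3 : 0 < l3) :
    (∫ z : EuclideanSpace ℝ (Fin 6) × EuclideanSpace ℝ (Fin 6),
        Real.exp (-‖z.1‖ ^ 2 / l1 - ‖z.2‖ ^ 2 / l2 - ‖z.1 + z.2‖ ^ 2 / l3)) =
      π ^ 6 * (l1⁻¹ * l2⁻¹ + l1⁻¹ * l3⁻¹ + l2⁻¹ * l3⁻¹) ^ (-3 : ℤ) := by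
  have key := integral_exp_neg_mul_norm_sq_sub_mul_norm_sq_sub_mul_norm_add_sq
    (V := EuclideanSpace ℝ (Fin 6)) (a := l1⁻¹) (b := l2⁻¹) (c := l3⁻¹)
    (by positivity) (by positivity)
  rw [finrank_euclideanSpace_fin, show ((6 : ℕ) : ℝ) / 2 = (3 : ℕ) by norm_num, rpow_natCast,
    div_pow, ← pow_mul] at key
  rw [zpow_neg, zpow_ofNat, ← div_eq_mul_inv, ← key]
  congr 1 with z
  ring_nf
end

section
/- Define F(ε,L) = ∫_{[ε,L]³} (ℓ₁+ℓ₂+ℓ₃)^{−3} dℓ₁dℓ₂dℓ₃ for 0 < ε < L. Then the limit as ε → 0⁺ of F(ε,L)/log(1/ε) exists and equals 1/2; i.e., F(ε,L) = −(1/2)·log ε + O(1) as ε → 0⁺ for fixed L. -/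
/-!
Integrating `(ℓ₁ + ℓ₂ + ℓ₃)⁻³` one variable at a time over `[ε, L]³` gives the closed form
`(3 log (2ε + L) - log (3ε) - 3 log (ε + 2L) + log (3L)) / 2`. The only term that is singular
as `ε → 0⁺` is `-(1/2) log ε`, and everything else stays bounded.
-/

open MeasureTheory Real Filter Topology Set

theorem MeasurableEquiv.coe_piFinSuccAbove_zero_symm {α : Type*} [MeasurableSpace α] (n : ℕ) :
    ⇑(MeasurableEquiv.piFinSuccAbove (fun _ : Fin (n + 1) => α) 0).symm =
      fun p => Fin.cons p.1 p.2 := by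
  ext p
  simp [MeasurableEquiv.piFinSuccAbove_symm_apply, Fin.insertNthEquiv]

namespace MeasureTheory

variable {α E : Type*} [MeasurableSpace α] [NormedAddCommGroup E] {μ : Measure α} [SigmaFinite μ]

theorem Integrable.comp_fin_cons {n : ℕ} {f : (Fin (n + 1) → α) → E}
    (hf : Integrable f (Measure.pi fun _ => μ)) :
    Integrable (fun p : α × (Fin n → α) => f (Fin.cons p.1 p.2))
      (μ.prod (Measure.pi fun _ => μ)) := by
  have hmp := (measurePreserving_piFinSuccAbove (fun _ : Fin (n + 1) => μ) 0).symm
  simpa only [MeasurableEquiv.coe_piFinSuccAbove_zero_symm, Function.comp_def] using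
    hmp.integrable_comp_of_integrable hf

variable [NormedSpace ℝ E]

theorem integral_pi_fin_two {f : (Fin 2 → α) → E} (hf : Integrable f (Measure.pi fun _ => μ)) :
    ∫ ℓ, f ℓ ∂Measure.pi (fun _ => μ) = ∫ x, ∫ y, f ![x, y] ∂μ ∂μ := by
  have hmp := (measurePreserving_finTwoArrow μ).symm
  rw [← hmp.integral_comp' f]
  exact integral_prod (fun p => f ![p.1, p.2]) (hmp.integrable_comp_of_integrable hf)

theorem integral_pi_fin_succ {n : ℕ} {f : (Fin (n + 1) → α) → E}
    (hf : Integrable f (Measure.pi fun _ => μ)) :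
    ∫ ℓ, f ℓ ∂Measure.pi (fun _ => μ) =
      ∫ x, ∫ g, f (Fin.cons x g) ∂Measure.pi (fun _ => μ) ∂μ := by
  have hmp := (measurePreserving_piFinSuccAbove (fun _ : Fin (n + 1) => μ) 0).symm
  rw [← hmp.integral_comp' f, MeasurableEquiv.coe_piFinSuccAbove_zero_symm]
  exact integral_prod _ hf.comp_fin_cons

theorem integral_pi_fin_three {f : (Fin 3 → α) → E} (hf : Integrable f (Measure.pi fun _ => μ)) :
    ∫ ℓ, f ℓ ∂Measure.pi (fun _ => μ) = ∫ x, ∫ y, ∫ z, f ![x, y, z] ∂μ ∂μ ∂μ := by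
  rw [integral_pi_fin_succ hf]
  exact integral_congr_ae (hf.comp_fin_cons.prod_right_ae.mono fun x hx => integral_pi_fin_two hx)

end MeasureTheory

section Primitives

variable {a b c : ℝ}

theorem intervalIntegrable_inv_add_pow (ha : 0 < c + a) (hb : 0 < c + b) (k : ℕ) :
    IntervalIntegrable (fun t => ((c + t) ^ k)⁻¹) volume a b := by
  refine ContinuousOn.intervalIntegrable (ContinuousOn.inv₀ (by fun_prop) fun t ht => ?_)
  have : 0 < c + t := by
    rcases mem_uIcc.1 ht with h | h <;> linarith [h.1]
  positivity

theorem integral_inv_add_pow (ha : 0 < c + a) (hb : 0 < c + b) (k : ℕ) :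
    ∫ t in a..b, ((c + t) ^ (k + 2))⁻¹ =
      (((c + a) ^ (k + 1))⁻¹ - ((c + b) ^ (k + 1))⁻¹) / (k + 1) := by
  have hzpow (u : ℝ) (m : ℕ) : (u ^ m)⁻¹ = u ^ (-(m : ℤ)) := by rw [zpow_neg, zpow_natCast]
  rw [intervalIntegral.integral_comp_add_left (fun u => (u ^ (k + 2))⁻¹) c]
  simp only [hzpow]
  rw [integral_zpow (Or.inr ⟨by omega, notMem_uIcc_of_lt ha hb⟩),
    show -((k + 2 : ℕ) : ℤ) + 1 = -((k + 1 : ℕ) : ℤ) by push_cast; ring, ← hzpow, ← hzpow]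
  push_cast
  rw [show -((k : ℝ) + 2) + 1 = -(k + 1) by ring, div_neg, ← neg_div, neg_sub]

theorem integral_inv_add (ha : 0 < c + a) (hb : 0 < c + b) :
    ∫ t in a..b, (c + t)⁻¹ = log (c + b) - log (c + a) := by
  rw [intervalIntegral.integral_comp_add_left (fun u => u⁻¹) c, integral_inv_of_pos ha hb,
    log_div hb.ne' ha.ne']

end Primitives

theorem integral_Icc_Icc_inv_add_add_pow_three {a b c : ℝ} (hc : 0 < c + 2 * a) (hab : a ≤ b) :
    ∫ y in Icc a b, ∫ z in Icc a b, ((c + y + z) ^ 3)⁻¹ =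
      ((2 * a + c)⁻¹ - 2 * (a + b + c)⁻¹ + (2 * b + c)⁻¹) / 2 := by
  have inner (y : ℝ) (hy : y ∈ Icc a b) : ∫ z in Icc a b, ((c + y + z) ^ 3)⁻¹ =
      ((a + c + y) ^ 2)⁻¹ / 2 - ((b + c + y) ^ 2)⁻¹ / 2 := by
    rw [integral_Icc_eq_integral_Ioc, ← intervalIntegral.integral_of_le hab,
      integral_inv_add_pow (by linarith [hy.1]) (by linarith [hy.1]) 1]
    ring
  have hsq (d : ℝ) (hd : 0 < d + a) :
      IntervalIntegrable (fun y => ((d + y) ^ 2)⁻¹ / 2) volume a b :=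
    (intervalIntegrable_inv_add_pow hd (by linarith) 2).div_const _
  rw [setIntegral_congr_fun measurableSet_Icc inner, integral_Icc_eq_integral_Ioc,
    ← intervalIntegral.integral_of_le hab,
    intervalIntegral.integral_sub (hsq _ (by linarith)) (hsq _ (by linarith)),
    intervalIntegral.integral_div, intervalIntegral.integral_div,
    integral_inv_add_pow (by linarith) (by linarith) 0,
    integral_inv_add_pow (by linarith) (by linarith) 0]
  ring

theorem integral_pi_Icc_inv_sum_pow_three {a b : ℝ} (ha : 0 < a) (hab : a ≤ b) :
    ∫ ℓ : Fin 3 → ℝ in univ.pi fun _ => Icc a b, ((ℓ 0 + ℓ 1 + ℓ 2) ^ 3)⁻¹ =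
      (3 * log (2 * a + b) - log (3 * a) - 3 * log (a + 2 * b) + log (3 * b)) / 2 := by
  have hint : IntegrableOn (fun ℓ : Fin 3 → ℝ => ((ℓ 0 + ℓ 1 + ℓ 2) ^ 3)⁻¹)
      (univ.pi fun _ => Icc a b) := by
    refine ContinuousOn.integrableOn_compact (isCompact_univ_pi fun _ => isCompact_Icc)
      (ContinuousOn.inv₀ (by fun_prop) fun ℓ hℓ => ?_)
    have : 0 < ℓ 0 + ℓ 1 + ℓ 2 := by
      linarith [(hℓ 0 trivial).1, (hℓ 1 trivial).1, (hℓ 2 trivial).1]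
    positivity
  have hinv (d : ℝ) (hd : 0 < d + a) : IntervalIntegrable (fun x => (d + x)⁻¹) volume a b := by
    simpa using intervalIntegrable_inv_add_pow hd (by linarith) 1
  rw [IntegrableOn, volume_pi, Measure.restrict_pi_pi] at hint
  rw [volume_pi, Measure.restrict_pi_pi, integral_pi_fin_three hint]
  simp only [Matrix.cons_val_zero, Matrix.cons_val_one, Matrix.cons_val_two, Matrix.head_cons,
    Matrix.tail_cons]
  rw [setIntegral_congr_fun measurableSet_Icc fun x hx =>
      integral_Icc_Icc_inv_add_add_pow_three (by linarith [hx.1]) hab,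
    integral_Icc_eq_integral_Ioc, ← intervalIntegral.integral_of_le hab,
    intervalIntegral.integral_div,
    intervalIntegral.integral_add ((hinv _ (by linarith)).sub ((hinv _ (by linarith)).const_mul 2))
      (hinv _ (by linarith)),
    intervalIntegral.integral_sub (hinv _ (by linarith)) ((hinv _ (by linarith)).const_mul 2),
    intervalIntegral.integral_const_mul, integral_inv_add (by linarith) (by linarith),
    integral_inv_add (by linarith) (by linarith), integral_inv_add (by linarith) (by linarith)]
  ring_nf

theorem Filter.Tendsto.div_of_tendsto_sub_mul {α : Type*} {l : Filter α} {f h : α → ℝ}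
    {c d : ℝ} (hf : Tendsto (fun x => f x - c * h x) l (𝓝 d)) (hh : Tendsto h l atTop) :
    Tendsto (fun x => f x / h x) l (𝓝 c) := by
  have hdecomp : (fun x => c + (f x - c * h x) / h x) =ᶠ[l] fun x => f x / h x := by
    filter_upwards [hh.eventually_ne_atTop 0] with x hx
    field_simp
    ring
  simpa using (tendsto_const_nhds.add (hf.div_atTop hh)).congr' hdecomp

/-- The logarithmic UV divergence of the 3-vertex wheel weight: the integral of
`(ℓ₁+ℓ₂+ℓ₃)⁻³` over `[ε,L]³` behaves as `(1/2)·log(1/ε)` as `ε → 0⁺`. -/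
theorem wheel3_log_divergence (L : ℝ) (hL : 0 < L) :
    Tendsto
      (fun ε : ℝ =>
        (∫ ℓ : Fin 3 → ℝ in Set.univ.pi fun _ => Set.Icc ε L,
          ((ℓ 0 + ℓ 1 + ℓ 2) ^ 3)⁻¹) / Real.log (1 / ε))
      (𝓝[>] 0) (𝓝 (1 / 2)) := by
  have hlog : Tendsto (fun ε : ℝ => log (1 / ε)) (𝓝[>] 0) atTop := by
    simpa only [one_div, Function.comp_def] using tendsto_log_atTop.comp tendsto_inv_nhdsGT_zero
  have hbounded : ContinuousAt
      (fun ε => (3 * log (2 * ε + L) - log 3 - 3 * log (ε + 2 * L) + log (3 * L)) / 2) 0 := by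
    fun_prop (disch := positivity)
  refine Tendsto.div_of_tendsto_sub_mul (hbounded.continuousWithinAt.tendsto.congr' ?_) hlog
  filter_upwards [Ioo_mem_nhdsGT hL] with ε hε
  rw [integral_pi_Icc_inv_sum_pow_three hε.1 hε.2.le, log_mul three_ne_zero hε.1.ne', one_div ε,
    log_inv]
  ring
end
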